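/- arXiv:2004.12488 — 5 statements merged into one kernel-verified Lean document; each statement's English description precedes it below -/
import Mathlib

section
/- Let (X,E) be a strict poset and A ⊆ X. Let ≈_A be the equivalence relation on X defined by x ≈_A y iff x = y or (x ∈ A and y ∈ A). Then the transitive closure S of the relation on X/≈_A induced by E is irreflexive (equivalently, the quotient map X → X/≈_A is order preserving into (X/≈_A, S)) if and only if A is an antichain in (X,E). -/
/-- The relation on the quotient `X/≈` induced by a relation `E` on `X`. -/
def inducedRel {X : Type*} (E : X → X → Prop) (s : Setoid X) :
    Quotient s → Quotient s → Prop :=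
  fun α β => ∃ x y : X, Quotient.mk s x = α ∧ Quotient.mk s y = β ∧ E x y

/-- The equivalence relation `≈_A` on `X` identifying all elements of `A ⊆ X`
and nothing else: `x ≈_A y` iff `x = y` or both `x ∈ A` and `y ∈ A`. -/
def subsetSetoid {X : Type*} (A : Set X) : Setoid X where
  r x y := x = y ∨ (x ∈ A ∧ y ∈ A)
  iseqv := by
    refine ⟨fun x => Or.inl rfl, ?_, ?_⟩
    · rintro x y (rfl | ⟨hx, hy⟩)
      · exact Or.inl rfl
      · exact Or.inr ⟨hy, hx⟩
    · rintro x y z (rfl | ⟨hx, hy⟩) hyz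
      · exact hyz
      · rcases hyz with rfl | ⟨_, hz⟩
        · exact Or.inr ⟨hx, hy⟩
        · exact Or.inr ⟨hx, hz⟩

/-! Since `A` is an antichain, a chain of induced steps in `X/≈_A` passes through the class of `A`
at most once. So every such chain lifts either to a single `E`-step, or to `E x a` and `E a' y`
with `a, a' ∈ A`. This lifted relation descends to a transitive relation on the quotient, which is
irreflexive because `E` is and `A` is an antichain. -/

open Relation

section

variable {X : Type*} {E F : X → X → Prop} {A : Set X}

theorem irrefl_inducedRel_iff {s : Setoid X} :
    Std.Irrefl (inducedRel E s) ↔ ∀ x y, s x y → ¬ E x y := by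
  constructor
  · intro h x y hxy hE
    exact h.irrefl _ ⟨x, y, rfl, (Quotient.sound hxy).symm, hE⟩
  · refine fun h => ⟨?_⟩
    rintro α ⟨x, y, rfl, hyx, hE⟩
    exact h x y (Quotient.exact hyx.symm) hE

theorem inducedRel_mono {s : Setoid X} (h : E ≤ F) : inducedRel E s ≤ inducedRel F s :=
  fun _ _ ⟨x, y, hx, hy, hE⟩ => ⟨x, y, hx, hy, h x y hE⟩

def collapseRel (E : X → X → Prop) (A : Set X) (x y : X) : Prop :=
  E x y ∨ ∃ a ∈ A, ∃ a' ∈ A, E x a ∧ E a' y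

variable (hA : ∀ a ∈ A, ∀ a' ∈ A, ¬ E a a')
include hA

theorem rel_of_collapseRel_of_mem_left {x y : X} (hx : x ∈ A) (h : collapseRel E A x y) :
    E x y :=
  h.resolve_right fun ⟨a, ha, _, _, hxa, _⟩ => hA x hx a ha hxa

theorem rel_of_collapseRel_of_mem_right {x y : X} (hy : y ∈ A) (h : collapseRel E A x y) :
    E x y :=
  h.resolve_right fun ⟨_, _, a', ha', _, ha'y⟩ => hA a' ha' y hy ha'y

variable [IsTrans X E]

theorem collapseRel_irrefl [Std.Irrefl E] (x : X) : ¬ collapseRel E A x x := by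
  rintro (hxx | ⟨a, ha, a', ha', hxa, ha'x⟩)
  · exact irrefl x hxx
  · exact hA a' ha' a ha (_root_.trans ha'x hxa)

theorem collapseRel_trans {x y z : X} (hxy : collapseRel E A x y) (hyz : collapseRel E A y z) :
    collapseRel E A x z := by
  rcases hxy with hxy | ⟨a, ha, a', ha', hxa, ha'y⟩
  · rcases hyz with hyz | ⟨b, hb, b', hb', hyb, hb'z⟩
    · exact Or.inl (_root_.trans hxy hyz)
    · exact Or.inr ⟨b, hb, b', hb', _root_.trans hxy hyb, hb'z⟩
  · rcases hyz with hyz | ⟨b, hb, _, _, hyb, _⟩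
    · exact Or.inr ⟨a, ha, a', ha', hxa, _root_.trans ha'y hyz⟩
    · exact absurd (_root_.trans ha'y hyb) (hA a' ha' b hb)

theorem isTrans_inducedRel_collapseRel :
    IsTrans _ (inducedRel (collapseRel E A) (subsetSetoid A)) := by
  refine ⟨?_⟩
  rintro _ _ _ ⟨x, y, rfl, rfl, hxy⟩ ⟨y', z, hy', rfl, hy'z⟩
  rcases Quotient.exact hy' with rfl | ⟨hy'A, hyA⟩
  · exact ⟨x, z, rfl, rfl, collapseRel_trans hA hxy hy'z⟩
  · exact ⟨x, z, rfl, rfl, Or.inr ⟨y, hyA, y', hy'A, rel_of_collapseRel_of_mem_right hA hyA hxy,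
      rel_of_collapseRel_of_mem_left hA hy'A hy'z⟩⟩

theorem irrefl_inducedRel_collapseRel [Std.Irrefl E] :
    Std.Irrefl (inducedRel (collapseRel E A) (subsetSetoid A)) := by
  refine irrefl_inducedRel_iff.2 fun x y hxy hE => ?_
  rcases hxy with rfl | ⟨hx, hy⟩
  · exact collapseRel_irrefl hA x hE
  · exact hA x hx y hy (rel_of_collapseRel_of_mem_left hA hx hE)

end

/-- For a strict poset `(X,E)` and `A ⊆ X`, the transitive closure of
the relation induced by `E` on `X/≈_A` is irreflexive (i.e. the quotient map is order
preserving) iff `A` is an antichain in `(X,E)`. -/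
theorem quotient_by_subset_orderPreserving_iff_antichain {X : Type*}
    (E : X → X → Prop) (hirr : Irreflexive E) (htrans : Transitive E) (A : Set X) :
    Irreflexive (Relation.TransGen (inducedRel E (subsetSetoid A))) ↔
      ∀ a ∈ A, ∀ a' ∈ A, ¬ E a a' ∧ ¬ E a' a := by
  constructor
  · intro h a ha a' ha'
    have hsep : ∀ x y, subsetSetoid A x y → ¬ E x y :=
      irrefl_inducedRel_iff.1 ⟨fun α hα => h α (.single hα)⟩
    exact ⟨hsep a a' (Or.inr ⟨ha, ha'⟩), hsep a' a (Or.inr ⟨ha', ha⟩)⟩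
  · intro hanti
    have : IsTrans X E := isTrans_def.2 htrans
    have : Std.Irrefl E := ⟨hirr⟩
    have hA : ∀ a ∈ A, ∀ a' ∈ A, ¬ E a a' := fun a ha a' ha' => (hanti a ha a' ha').1
    have := isTrans_inducedRel_collapseRel hA
    have := irrefl_inducedRel_collapseRel hA
    have hle : TransGen (inducedRel E (subsetSetoid A)) ≤
        inducedRel (collapseRel E A) (subsetSetoid A) :=
      transGen_minimal (inducedRel_mono fun _ _ => Or.inl)
    exact fun α hα => irrefl α (hle α α hα)
end

section
/- Let θ be a dendrogram over a finite nonempty set X. Then: (i) for all x, y ∈ X, the set { t ≥ 0 | x and y lie in one block of θ(t) } is nonempty and has a least element, so Ψ_X(θ)(x,y) = min{ t ≥ 0 | x and y lie in one block of θ(t) } is well defined; (ii) Ψ_X(θ) is an ultrametric on X: it vanishes exactly as required on the diagonal, is symmetric, and satisfies Ψ_X(θ)(x,z) ≤ max(Ψ_X(θ)(x,y), Ψ_X(θ)(y,z)) for all x, y, z ∈ X. -/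
/-! The infimum defining `Ψ` is attained because `θ` is constant on some interval `[s, s + δ)`
to the right of each `s` (D1). The ultrametric inequality is then transitivity of the
equivalence relation `θ (max (Ψ x y) (Ψ y z))`, which by monotonicity relates both pairs. -/

open scoped NNReal

/-- `Ψ_X(θ)(x,y)`: the least `t` at which `x` and `y` lie in one block of `θ(t)`. -/
noncomputable def PsiMap {X : Type*} (θ : ℝ≥0 → Setoid X) (x y : X) : ℝ≥0 :=
  sInf {t : ℝ≥0 | (θ t).r x y}

section PsiMap

variable {X : Type*} (θ : ℝ≥0 → Setoid X)

theorem psiMap_le_of_rel {x y : X} {t : ℝ≥0} (h : (θ t).r x y) : PsiMap θ x y ≤ t :=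
  csInf_le (OrderBot.bddBelow _) h

theorem psiMap_self (x : X) : PsiMap θ x x = 0 :=
  nonpos_iff_eq_zero.mp (psiMap_le_of_rel θ ((θ 0).refl' x))

theorem psiMap_comm (x y : X) : PsiMap θ x y = PsiMap θ y x := by
  simp only [PsiMap, (θ _).comm']

variable {θ}

theorem rel_psiMap (hmono : Monotone θ)
    (hD1 : ∀ t : ℝ≥0, ∃ δ : ℝ≥0, 0 < δ ∧ θ t = θ (t + δ))
    {x y : X} (hne : {t : ℝ≥0 | (θ t).r x y}.Nonempty) :
    (θ (PsiMap θ x y)).r x y := by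
  obtain ⟨δ, hδ, hθ⟩ := hD1 (PsiMap θ x y)
  obtain ⟨t, ht, htlt⟩ := exists_lt_of_csInf_lt hne (lt_add_of_pos_right (PsiMap θ x y) hδ)
  rw [hθ]
  exact hmono htlt.le ht

theorem isLeast_psiMap (hmono : Monotone θ)
    (hD1 : ∀ t : ℝ≥0, ∃ δ : ℝ≥0, 0 < δ ∧ θ t = θ (t + δ))
    {x y : X} (hne : {t : ℝ≥0 | (θ t).r x y}.Nonempty) :
    IsLeast {t : ℝ≥0 | (θ t).r x y} (PsiMap θ x y) :=
  ⟨rel_psiMap hmono hD1 hne, fun _ => psiMap_le_of_rel θ⟩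

theorem psiMap_le_max (hmono : Monotone θ)
    (hD1 : ∀ t : ℝ≥0, ∃ δ : ℝ≥0, 0 < δ ∧ θ t = θ (t + δ))
    (hne : ∀ x y : X, {t : ℝ≥0 | (θ t).r x y}.Nonempty) (x y z : X) :
    PsiMap θ x z ≤ max (PsiMap θ x y) (PsiMap θ y z) := by
  have hxy := hmono (le_max_left _ (PsiMap θ y z)) (rel_psiMap hmono hD1 (hne x y))
  have hyz := hmono (le_max_right (PsiMap θ x y) _) (rel_psiMap hmono hD1 (hne y z))
  exact psiMap_le_of_rel θ ((θ _).trans' hxy hyz)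

end PsiMap

theorem Psi_is_ultrametric_general {X : Type*}
    (θ : ℝ≥0 → Setoid X) (hmono : Monotone θ)
    (hD1 : ∀ t : ℝ≥0, ∃ δ : ℝ≥0, 0 < δ ∧ θ t = θ (t + δ))
    (hD2 : ∃ t₀ : ℝ≥0, 0 < t₀ ∧ θ t₀ = ⊤) :
    (∀ x y : X, ({t : ℝ≥0 | (θ t).r x y}).Nonempty ∧
      ∃ tm : ℝ≥0, IsLeast {t : ℝ≥0 | (θ t).r x y} tm) ∧
    (∀ x : X, PsiMap θ x x = 0) ∧
    (∀ x y : X, PsiMap θ x y = PsiMap θ y x) ∧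
    (∀ x y z : X, PsiMap θ x z ≤ max (PsiMap θ x y) (PsiMap θ y z)) := by
  obtain ⟨t₀, -, htop⟩ := hD2
  have hne : ∀ x y : X, {t : ℝ≥0 | (θ t).r x y}.Nonempty := fun x y =>
    ⟨t₀, show (θ t₀).r x y by rw [htop]; trivial⟩
  exact ⟨fun x y => ⟨hne x y, _, isLeast_psiMap hmono hD1 (hne x y)⟩, psiMap_self θ,
    psiMap_comm θ, psiMap_le_max hmono hD1 hne⟩

/-- For a dendrogram `θ` over a finite nonempty set `X`:
(i) for all `x, y` the set `{t | x, y in one block of θ(t)}` is nonempty and has a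
least element, so `Ψ_X(θ)(x,y)` is well defined as a minimum; (ii) `Ψ_X(θ)` is an
ultrametric on `X`: it vanishes on the diagonal, is symmetric, and satisfies the
ultrametric inequality (nonnegativity being automatic in `ℝ≥0`). -/
theorem Psi_is_ultrametric {X : Type*} [Finite X] [Nonempty X]
    (θ : ℝ≥0 → Setoid X) (hmono : Monotone θ)
    (hD1 : ∀ t : ℝ≥0, ∃ δ : ℝ≥0, 0 < δ ∧ θ t = θ (t + δ))
    (hD3 : θ 0 = ⊥)
    (hD2 : ∃ t₀ : ℝ≥0, 0 < t₀ ∧ θ t₀ = ⊤) :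
    (∀ x y : X, ({t : ℝ≥0 | (θ t).r x y}).Nonempty ∧
      ∃ tm : ℝ≥0, IsLeast {t : ℝ≥0 | (θ t).r x y} tm) ∧
    (∀ x : X, PsiMap θ x x = 0) ∧
    (∀ x y : X, PsiMap θ x y = PsiMap θ y x) ∧
    (∀ x y z : X, PsiMap θ x z ≤ max (PsiMap θ x y) (PsiMap θ y z)) :=
  Psi_is_ultrametric_general θ hmono hD1 hD2
end

section
/- Let X be a finite nonempty set, θ a partial dendrogram over X, and ε ≥ 0. Then U_ε(θ) is an ultrametric on X: it vanishes on the diagonal, is symmetric, and satisfies U_ε(θ)(x,z) ≤ max(U_ε(θ)(x,y), U_ε(θ)(y,z)) for all x, y, z ∈ X. -/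
/-!
Merge heights are infima of upper sets of times, so the usual argument for single-linkage
ultrametrics applies: if `x, y` and `y, z` are both merged at every time after `a` and `b`, then
`x, z` are merged at every time after `max a b`, and by density of `ℝ≥0` that bounds their merge
height by `max a b`; no infimum has to be attained. Pairs that are never merged get the value
`diam θ + ε`, which bounds every merge height as soon as `θ` attains its greatest partition;
for monotone `θ` and finite `X` it does, since `Setoid X` is then finite.
-/

open scoped NNReal
open Classical

/-- The diameter of a partial dendrogram `θ`: the least `t` at which `θ`
attains its greatest partition `θ(∞) = ⨆ t', θ t'`. -/
noncomputable def diamPD {X : Type*} (θ : ℝ≥0 → Setoid X) : ℝ≥0 :=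
  sInf {t : ℝ≥0 | θ t = ⨆ t', θ t'}

/-- The ultrametric completion `U_ε(θ)`: the merge height of `x` and `y` if they
end up in one block of `θ(∞)`, and `diam θ + ε` otherwise. -/
noncomputable def Ueps {X : Type*} (θ : ℝ≥0 → Setoid X) (ε : ℝ≥0) (x y : X) : ℝ≥0 :=
  if (⨆ t, θ t).r x y then sInf {t : ℝ≥0 | (θ t).r x y} else diamPD θ + ε

instance Setoid.instFinite {X : Type*} [Finite X] : Finite (Setoid X) :=
  Finite.of_injective (fun s : Setoid X => s.r) fun _ _ h =>
    Setoid.ext fun x y => iff_of_eq (congrFun₂ h x y)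

theorem Monotone.exists_eq_iSup_of_finite {ι α : Type*} [Preorder ι] [IsDirectedOrder ι]
    [Nonempty ι] [CompleteLattice α] [Finite α] {f : ι → α} (hf : Monotone f) :
    ∃ i, f i = ⨆ j, f j := by
  obtain ⟨i, hi⟩ := hf.directed_le.finite_le fun a : Set.range f => a.2.choose
  refine ⟨i, le_antisymm (le_iSup f i) (iSup_le fun j => ?_)⟩
  simpa only [(⟨j, rfl⟩ : f j ∈ Set.range f).choose_spec] using hi ⟨f j, j, rfl⟩

section UpperSets

variable {α : Type*} [ConditionallyCompleteLinearOrderBot α]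

theorem IsUpperSet.mem_of_csInf_lt {S : Set α} (hS : IsUpperSet S) (hne : S.Nonempty) {c : α}
    (hc : sInf S < c) : c ∈ S :=
  let ⟨_, hs, hsc⟩ := exists_lt_of_csInf_lt hne hc
  hS hsc.le hs

theorem csInf_le_max_of_isUpperSet [DenselyOrdered α] {S T U : Set α} (hS : IsUpperSet S)
    (hT : IsUpperSet T) (hSne : S.Nonempty) (hTne : T.Nonempty) (hU : S ∩ T ⊆ U) :
    sInf U ≤ max (sInf S) (sInf T) :=
  le_of_forall_gt_imp_ge_of_dense fun _ hc =>
    csInf_le (OrderBot.bddBelow U)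
      (hU ⟨hS.mem_of_csInf_lt hSne (le_max_left _ _ |>.trans_lt hc),
        hT.mem_of_csInf_lt hTne (le_max_right _ _ |>.trans_lt hc)⟩)

end UpperSets

section Ueps

variable {X : Type*} (θ : ℝ≥0 → Setoid X) (ε : ℝ≥0)

theorem Ueps_self (x : X) : Ueps θ ε x x = 0 := by
  rw [Ueps, if_pos ((⨆ t, θ t).refl' x)]
  exact le_antisymm (csInf_le (OrderBot.bddBelow _) ((θ 0).refl' x)) zero_le

theorem Ueps_comm (x y : X) : Ueps θ ε x y = Ueps θ ε y x := by
  simp only [Ueps, Setoid.comm']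

variable {θ}

theorem Ueps_of_rel {x y : X} (h : (⨆ t, θ t).r x y) :
    Ueps θ ε x y = sInf {t | (θ t).r x y} :=
  if_pos h

theorem Ueps_of_not_rel {x y : X} (h : ¬(⨆ t, θ t).r x y) : Ueps θ ε x y = diamPD θ + ε :=
  if_neg h

theorem Ueps_le_diamPD_add (hattain : ∃ T, θ T = ⨆ t, θ t) (x z : X) :
    Ueps θ ε x z ≤ diamPD θ + ε := by
  by_cases hxz : (⨆ t, θ t).r x z
  · rw [Ueps_of_rel ε hxz]
    refine (csInf_le_csInf (OrderBot.bddBelow _) hattain fun t ht => ?_).trans le_self_add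
    exact show (θ t).r x z from (show θ t = _ from ht) ▸ hxz
  · rw [Ueps_of_not_rel ε hxz]

theorem isUpperSet_setOf_rel (hmono : Monotone θ) (x y : X) :
    IsUpperSet {t | (θ t).r x y} :=
  fun _ _ hst hs => hmono hst hs

theorem Ueps_le_max (hmono : Monotone θ) (hattain : ∃ T, θ T = ⨆ t, θ t) (x y z : X) :
    Ueps θ ε x z ≤ max (Ueps θ ε x y) (Ueps θ ε y z) := by
  obtain ⟨T, hT⟩ := hattain
  by_cases hxy : (⨆ t, θ t).r x y
  · by_cases hyz : (⨆ t, θ t).r y z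
    · rw [Ueps_of_rel ε (Setoid.trans' _ hxy hyz), Ueps_of_rel ε hxy, Ueps_of_rel ε hyz]
      exact csInf_le_max_of_isUpperSet (isUpperSet_setOf_rel hmono x y)
        (isUpperSet_setOf_rel hmono y z) ⟨T, show (θ T).r x y from hT ▸ hxy⟩
        ⟨T, show (θ T).r y z from hT ▸ hyz⟩ fun t ht => Setoid.trans' _ ht.1 ht.2
    · rw [Ueps_of_not_rel ε hyz]
      exact le_max_of_le_right (Ueps_le_diamPD_add ε ⟨T, hT⟩ x z)
  · rw [Ueps_of_not_rel ε hxy]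
    exact le_max_of_le_left (Ueps_le_diamPD_add ε ⟨T, hT⟩ x z)

end Ueps

theorem Ueps_is_ultrametric_general {X : Type*} [Finite X]
    (θ : ℝ≥0 → Setoid X) (hmono : Monotone θ)
    (ε : ℝ≥0) :
    (∀ x : X, Ueps θ ε x x = 0) ∧
    (∀ x y : X, Ueps θ ε x y = Ueps θ ε y x) ∧
    (∀ x y z : X, Ueps θ ε x z ≤ max (Ueps θ ε x y) (Ueps θ ε y z)) :=
  ⟨Ueps_self θ ε, Ueps_comm θ ε, Ueps_le_max ε hmono hmono.exists_eq_iSup_of_finite⟩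

/-- For a partial dendrogram `θ` over a finite nonempty set `X` and
`ε ≥ 0`, the ultrametric completion `U_ε(θ)` is an ultrametric on `X`: it vanishes
on the diagonal, is symmetric, and satisfies the ultrametric inequality
(nonnegativity being automatic in `ℝ≥0`). -/
theorem Ueps_is_ultrametric {X : Type*} [Finite X] [Nonempty X]
    (θ : ℝ≥0 → Setoid X) (hmono : Monotone θ)
    (hD1 : ∀ t : ℝ≥0, ∃ δ : ℝ≥0, 0 < δ ∧ θ t = θ (t + δ))
    (hD3 : θ 0 = ⊥)
    (ε : ℝ≥0) :
    (∀ x : X, Ueps θ ε x x = 0) ∧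
    (∀ x y : X, Ueps θ ε x y = Ueps θ ε y x) ∧
    (∀ x y z : X, Ueps θ ε x z ≤ max (Ueps θ ε x y) (Ueps θ ε y z)) :=
  Ueps_is_ultrametric_general θ hmono ε
end

section
/- Let X be a finite nonempty set, d : X × X → ℝ a function, p a positive integer, and Θ a finite set of partial dendrograms over X. Then there exists ε₀ > 0 such that for all ε, ε' ∈ (0, ε₀) and all θ, θ' ∈ Θ: ‖U_ε(θ) − d‖_p ≤ ‖U_ε(θ') − d‖_p if and only if ‖U_{ε'}(θ) − d‖_p ≤ ‖U_{ε'}(θ') − d‖_p. That is, all sufficiently small positive ε induce the same order on Θ by closeness of the completed ultrametric to d in the p-norm. -/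
open scoped NNReal
open Classical

/-- The `p`-norm distance between two functions `u, d : X × X → ℝ` on a finite set. -/
noncomputable def pnormDist {X : Type*} [Fintype X] (u d : X → X → ℝ) (p : ℕ) : ℝ :=
  (∑ x : X, ∑ y : X, |u x y - d x y| ^ p) ^ ((1 : ℝ) / p)

/-!
For `ε` below every positive `d(x,y) − diam θ`, each summand `|U_ε(θ)(x,y) − d(x,y)|^p` is a
polynomial in `ε`, so for `θ, θ' ∈ Θ` the difference of the `p`-th powers of the two distances
agrees just right of `0` with a real function analytic at `0`. Near `0` such a function is
`ε^n g(ε)` with `g(0) ≠ 0` or vanishes identically, so its sign is constant on some `(0, δ)`.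
Intersecting these intervals over the finitely many pairs in `Θ × Θ` gives `ε₀`.
-/

open Filter Topology

lemma AnalyticAt.eventuallyConst_sign_nhdsGT {f : ℝ → ℝ} {a : ℝ} (hf : AnalyticAt ℝ f a) :
    EventuallyConst (fun x => SignType.sign (f x)) (𝓝[>] a) := by
  by_cases hzero : ∀ᶠ x in 𝓝 a, f x = 0
  · refine (EventuallyConst.const 0).congr ?_
    filter_upwards [nhdsWithin_le_nhds hzero] with x hx
    simp [hx]
  obtain ⟨n, g, hg, hga, hfg⟩ := hf.exists_eventuallyEq_pow_smul_nonzero_iff.2 hzero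
  have hsign_g : Tendsto (fun x => SignType.sign (g x)) (𝓝 a) (pure (SignType.sign (g a))) := by
    have h := ((continuousAt_sign_of_ne_zero hga).comp hg.continuousAt).tendsto
    rwa [nhds_discrete SignType] at h
  refine (EventuallyConst.of_tendsto (hsign_g.mono_left nhdsWithin_le_nhds)).congr ?_
  filter_upwards [nhdsWithin_le_nhds hfg, self_mem_nhdsWithin] with x hx (hxa : a < x)
  simp [hx, sign_mul, sign_pow, sign_pos (sub_pos.2 hxa)]

lemma Set.Finite.exists_forall_Ioo_iff_of_eventuallyConst {α ι : Type*} [LinearOrder α]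
    [TopologicalSpace α] [OrderTopology α] [NoMaxOrder α] {a : α} {I : Set ι} (hI : I.Finite)
    {P : ι → α → Prop} (hP : ∀ i ∈ I, EventuallyConst (P i) (𝓝[>] a)) :
    ∃ u, a < u ∧ ∀ x ∈ Set.Ioo a u, ∀ y ∈ Set.Ioo a u, ∀ i ∈ I, (P i x ↔ P i y) := by
  choose! b hb using fun i hi => eventuallyConst_iff_exists_eventuallyEq.1 (hP i hi)
  obtain ⟨u, hau, hsub⟩ := mem_nhdsGT_iff_exists_Ioo_subset.1 ((eventually_all_finite hI).2 hb)
  exact ⟨u, hau, fun x hx y hy i hi => Iff.of_eq ((hsub hx i hi).trans (hsub hy i hi).symm)⟩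

def HasAnalyticRightGerm (f : ℝ≥0 → ℝ) : Prop :=
  ∃ g : ℝ → ℝ, AnalyticAt ℝ g 0 ∧ ∀ᶠ ε in 𝓝[>] (0 : ℝ≥0), f ε = g ε

namespace HasAnalyticRightGerm

lemma const (c : ℝ) : HasAnalyticRightGerm fun _ => c :=
  ⟨fun _ => c, analyticAt_const, Eventually.of_forall fun _ => rfl⟩

lemma sub {f f' : ℝ≥0 → ℝ} (hf : HasAnalyticRightGerm f) (hf' : HasAnalyticRightGerm f') :
    HasAnalyticRightGerm fun ε => f ε - f' ε := by
  obtain ⟨g, hg, hfg⟩ := hf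
  obtain ⟨g', hg', hfg'⟩ := hf'
  exact ⟨fun x => g x - g' x, hg.sub hg', by filter_upwards [hfg, hfg'] with ε h h'; rw [h, h']⟩

lemma finset_sum {ι : Type*} (s : Finset ι) {f : ι → ℝ≥0 → ℝ}
    (hf : ∀ i ∈ s, HasAnalyticRightGerm (f i)) :
    HasAnalyticRightGerm fun ε => ∑ i ∈ s, f i ε := by
  choose! g hg hfg using hf
  refine ⟨fun x => ∑ i ∈ s, g i x, Finset.analyticAt_fun_sum s hg, ?_⟩
  filter_upwards [s.eventually_all.2 hfg] with ε h
  exact Finset.sum_congr rfl h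

lemma abs_add_pow (c : ℝ) (p : ℕ) : HasAnalyticRightGerm fun ε => |c + ε| ^ p := by
  by_cases hc : 0 ≤ c
  · refine ⟨fun x => (c + x) ^ p, (analyticAt_const.add analyticAt_id).pow p,
      Eventually.of_forall fun ε => ?_⟩
    dsimp only
    rw [abs_of_nonneg (add_nonneg hc ε.coe_nonneg)]
  · refine ⟨fun x => (-(c + x)) ^ p, ((analyticAt_const.add analyticAt_id).neg).pow p, ?_⟩
    have hcoe : Tendsto (fun ε : ℝ≥0 => (ε : ℝ)) (𝓝[>] 0) (𝓝 0) :=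
      (NNReal.continuous_coe.tendsto' 0 0 NNReal.coe_zero).mono_left nhdsWithin_le_nhds
    filter_upwards [hcoe.eventually_lt_const (by linarith : (0 : ℝ) < -c)] with ε hε
    simp only [abs_of_neg (by linarith : c + ε < 0), neg_add]

lemma eventuallyConst_sign {f : ℝ≥0 → ℝ} (hf : HasAnalyticRightGerm f) :
    EventuallyConst (fun ε => SignType.sign (f ε)) (𝓝[>] 0) := by
  obtain ⟨g, hg, hfg⟩ := hf
  have hcoe : Tendsto (fun ε : ℝ≥0 => (ε : ℝ)) (𝓝[>] 0) (𝓝[>] 0) := by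
    have h := NNReal.continuous_coe.continuousWithinAt.tendsto_nhdsWithin
      (x := 0) (t := Set.Ioi 0) fun _ => NNReal.coe_pos.2
    rwa [NNReal.coe_zero] at h
  refine (hg.eventuallyConst_sign_nhdsGT.comp_tendsto hcoe).congr ?_
  filter_upwards [hfg] with ε h
  simp [h]

end HasAnalyticRightGerm

lemma hasAnalyticRightGerm_sum_abs_Ueps_sub_pow {X : Type*} [Fintype X]
    (θ : ℝ≥0 → Setoid X) (d : X → X → ℝ) (p : ℕ) :
    HasAnalyticRightGerm fun ε => ∑ x, ∑ y, |(Ueps θ ε x y : ℝ) - d x y| ^ p := by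
  refine .finset_sum _ fun x _ => .finset_sum _ fun y _ => ?_
  unfold Ueps
  split_ifs
  · exact .const _
  · convert HasAnalyticRightGerm.abs_add_pow (diamPD θ - d x y) p using 4
    push_cast
    ring

lemma pnormDist_le_pnormDist_iff {X : Type*} [Fintype X] {p : ℕ} (hp : 0 < p)
    (u v d : X → X → ℝ) :
    pnormDist u d p ≤ pnormDist v d p ↔
      ∑ x, ∑ y, |u x y - d x y| ^ p ≤ ∑ x, ∑ y, |v x y - d x y| ^ p := by
  have hnonneg (w : X → X → ℝ) : 0 ≤ ∑ x, ∑ y, |w x y - d x y| ^ p := by positivity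
  exact Real.rpow_le_rpow_iff (hnonneg u) (hnonneg v) (by positivity)

lemma eventuallyConst_pnormDist_Ueps_le {X : Type*} [Fintype X] {p : ℕ} (hp : 0 < p)
    (θ θ' : ℝ≥0 → Setoid X) (d : X → X → ℝ) :
    EventuallyConst (fun ε => pnormDist (fun x y => (Ueps θ ε x y : ℝ)) d p ≤
      pnormDist (fun x y => (Ueps θ' ε x y : ℝ)) d p) (𝓝[>] 0) := by
  have hdiff := (hasAnalyticRightGerm_sum_abs_Ueps_sub_pow θ d p).sub
    (hasAnalyticRightGerm_sum_abs_Ueps_sub_pow θ' d p)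
  refine (hdiff.eventuallyConst_sign.comp (· ≤ 0)).congr (Eventually.of_forall fun ε => ?_)
  simp only [Function.comp_apply, sign_nonpos_iff, sub_nonpos, pnormDist_le_pnormDist_iff hp]

theorem eps_order_stable_general {X : Type*} [Fintype X]
    (d : X → X → ℝ) (p : ℕ) (hp : 1 ≤ p)
    (Θ : Set (ℝ≥0 → Setoid X)) (hΘfin : Θ.Finite) :
    ∃ ε₀ : ℝ≥0, 0 < ε₀ ∧
      ∀ ε ε' : ℝ≥0, 0 < ε → ε < ε₀ → 0 < ε' → ε' < ε₀ →
        ∀ θ ∈ Θ, ∀ θ' ∈ Θ,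
          (pnormDist (fun x y => (Ueps θ ε x y : ℝ)) d p ≤
              pnormDist (fun x y => (Ueps θ' ε x y : ℝ)) d p ↔
            pnormDist (fun x y => (Ueps θ ε' x y : ℝ)) d p ≤
              pnormDist (fun x y => (Ueps θ' ε' x y : ℝ)) d p) := by
  obtain ⟨ε₀, hε₀, hstable⟩ := (hΘfin.prod hΘfin).exists_forall_Ioo_iff_of_eventuallyConst
    fun q _ => eventuallyConst_pnormDist_Ueps_le hp q.1 q.2 d
  exact ⟨ε₀, hε₀, fun ε ε' hε hεε₀ hε' hε'ε₀ θ hθ θ' hθ' =>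
    hstable ε ⟨hε, hεε₀⟩ ε' ⟨hε', hε'ε₀⟩ (θ, θ') ⟨hθ, hθ'⟩⟩

/-- For a finite family `Θ` of partial dendrograms over a finite
nonempty set `X`, a dissimilarity `d` and an integer `p ≥ 1`, there is an `ε₀ > 0`
such that all `ε, ε' ∈ (0, ε₀)` induce the same order on `Θ` by closeness of the
completed ultrametric `U_ε(θ)` to `d` in the `p`-norm. -/
theorem eps_order_stable {X : Type*} [Fintype X] [Nonempty X]
    (d : X → X → ℝ) (p : ℕ) (hp : 1 ≤ p)
    (Θ : Set (ℝ≥0 → Setoid X)) (hΘfin : Θ.Finite)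
    (hΘ : ∀ θ ∈ Θ, Monotone θ ∧
      (∀ t : ℝ≥0, ∃ δ : ℝ≥0, 0 < δ ∧ θ t = θ (t + δ)) ∧ θ 0 = ⊥) :
    ∃ ε₀ : ℝ≥0, 0 < ε₀ ∧
      ∀ ε ε' : ℝ≥0, 0 < ε → ε < ε₀ → 0 < ε' → ε' < ε₀ →
        ∀ θ ∈ Θ, ∀ θ' ∈ Θ,
          (pnormDist (fun x y => (Ueps θ ε x y : ℝ)) d p ≤
              pnormDist (fun x y => (Ueps θ' ε x y : ℝ)) d p ↔
            pnormDist (fun x y => (Ueps θ ε' x y : ℝ)) d p ≤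
              pnormDist (fun x y => (Ueps θ' ε' x y : ℝ)) d p) :=
  eps_order_stable_general d p hp Θ hΘfin
end

section
/- Let (X,E) be a strict poset and ≈ a regular equivalence relation on X, with S the transitive closure of the induced relation on X/≈. Let a, b ∈ X be such that the classes ⟦a⟧ and ⟦b⟧ are distinct and non-comparable under S (neither S(⟦a⟧,⟦b⟧) nor S(⟦b⟧,⟦a⟧) holds). Then the smallest equivalence relation ≈' on X containing ≈ and the pair (a,b) is again regular. In particular, any clustering obtained from the singleton partition by successively merging pairs of non-comparable classes is order preserving. -/
/-- An equivalence relation `s` on a strict poset `(X,E)` is regular if the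
transitive closure of the induced relation on the quotient is irreflexive
(equivalently, a strict partial order). -/
def RegularSetoid {X : Type*} (E : X → X → Prop) (s : Setoid X) : Prop :=
  Irreflexive (Relation.TransGen (inducedRel E s))

/-! Regularity of `s` says that `S` is a strict order on `X/s`, and by hypothesis `{⟦a⟧, ⟦b⟧}` is an
antichain of it. Gluing an antichain `M` of a preorder to a point gives the preorder "`x ≤ y`, or
`x` lies below and `y` above `M`", in which every strict inequality stays strict: reversing `x < y`
by the second clause would produce `m' ≤ x < y ≤ m` with `m, m' ∈ M`. The map from `X` to `X/s`
with the glued order is increasing along `E` and identifies `a` with `b`, so the kernel of its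
antisymmetrization contains the merged relation, which therefore has no `S`-cycles. -/

open Relation

section

variable {α : Type*}

def collapseLE [Preorder α] (M : Set α) (x y : α) : Prop :=
  x ≤ y ∨ x ∈ lowerClosure M ∧ y ∈ upperClosure M

/-- `α` with the points of `M` glued together, ordered by `collapseLE M`. -/
def Collapse (_M : Set α) : Type _ := α

namespace Collapse

variable [Preorder α] {M : Set α}

def of (M : Set α) (x : α) : Collapse M := x

instance : Preorder (Collapse M) where
  le := collapseLE (α := α) M
  le_refl _ := Or.inl le_rfl
  le_trans _ _ _ := by
    rintro (hxy | ⟨hx, hy⟩) (hyz | ⟨hy', hz⟩)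
    · exact Or.inl (hxy.trans hyz)
    · exact Or.inr ⟨(lowerClosure M).lower hxy hy', hz⟩
    · exact Or.inr ⟨hx, (upperClosure M).upper hyz hy⟩
    · exact Or.inr ⟨hx, hz⟩

theorem antisymmRel_of_mem {x y : α} (hx : x ∈ M) (hy : y ∈ M) :
    AntisymmRel (· ≤ ·) (of M x) (of M y) :=
  ⟨Or.inr ⟨subset_lowerClosure hx, subset_upperClosure hy⟩,
    Or.inr ⟨subset_lowerClosure hy, subset_upperClosure hx⟩⟩

theorem strictMono_of (hM : IsAntichain (· < ·) M) : StrictMono (of M) := by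
  intro x y hxy
  refine lt_of_le_not_ge (Or.inl hxy.le) ?_
  rintro (hyx | ⟨hy, hx⟩)
  · exact hyx.not_gt hxy
  · obtain ⟨m, hm, hym⟩ := mem_lowerClosure.1 hy
    obtain ⟨m', hm', hm'x⟩ := mem_upperClosure.1 hx
    have hlt : m' < m := (hm'x.trans_lt hxy).trans_le hym
    exact hlt.ne (hM.eq hm' hm hlt)

end Collapse

end

section RegularSetoid

variable {X : Type*} {E : X → X → Prop} {s : Setoid X}

theorem RegularSetoid.of_strictMono {β : Type*} [Preorder β] (f : X → β)
    (hs : ∀ ⦃x y⦄, s x y → f x ≤ f y) (hE : ∀ ⦃x y⦄, E x y → f x < f y) :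
    RegularSetoid E s := by
  have hstep : ∀ {α β}, inducedRel E s α β →
      ∀ x y, Quotient.mk s x = α → Quotient.mk s y = β → f x < f y := by
    rintro _ _ ⟨u, v, rfl, rfl, huv⟩ x y hx hy
    exact (hs (Quotient.exact hx)).trans_lt ((hE huv).trans_le (hs (Quotient.exact hy.symm)))
  have hchain : ∀ {α β}, TransGen (inducedRel E s) α β →
      ∀ x y, Quotient.mk s x = α → Quotient.mk s y = β → f x < f y := by
    intro α β h
    induction h with
    | single h => exact hstep h
    | tail _ h ih =>
      intro x y hx hy
      obtain ⟨m, hm⟩ := Quotient.exists_rep _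
      exact (ih x m hx hm).trans (hstep h m y hm hy)
  intro α h
  obtain ⟨x, rfl⟩ := Quotient.exists_rep α
  exact lt_irrefl _ (hchain h x x rfl rfl)

abbrev RegularSetoid.partialOrder (h : RegularSetoid E s) : PartialOrder (Quotient s) :=
  @partialOrderOfSO _ (TransGen (inducedRel E s)) { irrefl := h, trans := fun _ _ _ => .trans }

end RegularSetoid

theorem merge_noncomparable_regular_general {X : Type*} (E : X → X → Prop)
    (s : Setoid X) (hreg : RegularSetoid E s)
    (a b : X)
    (hnc₁ : ¬ Relation.TransGen (inducedRel E s) (Quotient.mk s a) (Quotient.mk s b))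
    (hnc₂ : ¬ Relation.TransGen (inducedRel E s) (Quotient.mk s b) (Quotient.mk s a))
    (s' : Setoid X)
    (hleast : ∀ s'' : Setoid X, s ≤ s'' → s''.r a b → s' ≤ s'') :
    RegularSetoid E s' := by
  let := hreg.partialOrder
  let M : Set (Quotient s) := {Quotient.mk s a, Quotient.mk s b}
  have hM : IsAntichain (· < ·) M :=
    isAntichain_insert.2 ⟨Set.subsingleton_singleton.isAntichain _, by
      rintro _ rfl -
      exact ⟨hnc₁, hnc₂⟩⟩
  let f : X → Collapse M := fun x => Collapse.of M (Quotient.mk s x)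
  have hs' : s' ≤ (AntisymmRel.setoid _ (· ≤ ·)).comap f :=
    hleast _ (fun _ _ hxy => (congrArg (Collapse.of M) (Quotient.sound hxy)).antisymmRel)
      (Collapse.antisymmRel_of_mem (by simp [M]) (by simp [M]))
  exact .of_strictMono f (fun _ _ h => (hs' h).le)
    fun x y h => Collapse.strictMono_of hM (TransGen.single ⟨x, y, rfl, rfl, h⟩)

/-- Let `s` be a regular equivalence relation on a strict poset
`(X,E)`, and let `a, b ∈ X` have distinct classes which are non-comparable under
the transitive closure `S` of the induced relation.  Then the smallest equivalence
relation `s'` containing `s` and identifying `a` with `b` is again regular. -/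
theorem merge_noncomparable_regular {X : Type*} (E : X → X → Prop)
    (hirr : Irreflexive E) (htrans : Transitive E)
    (s : Setoid X) (hreg : RegularSetoid E s)
    (a b : X)
    (hab : Quotient.mk s a ≠ Quotient.mk s b)
    (hnc₁ : ¬ Relation.TransGen (inducedRel E s) (Quotient.mk s a) (Quotient.mk s b))
    (hnc₂ : ¬ Relation.TransGen (inducedRel E s) (Quotient.mk s b) (Quotient.mk s a))
    (s' : Setoid X)
    (hle : s ≤ s') (hab' : s'.r a b)
    (hleast : ∀ s'' : Setoid X, s ≤ s'' → s''.r a b → s' ≤ s'') :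
    RegularSetoid E s' :=
  merge_noncomparable_regular_general E s hreg a b hnc₁ hnc₂ s' hleast
end
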